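/- arXiv:2205.11325 — 7 statements merged into one kernel-verified Lean document; each statement's English description precedes it below -/
import Mathlib

section
/- In a separation algebra, if σ₂ ≽ σ₁ then there exists a ≽-largest state σᵣ such that σ₂ = σ₁ ⊕ σᵣ; i.e., the subtraction σ₂ ⊖ σ₁ is well-defined. -/
/-- A separation algebra: a partial, commutative, associative operation `op`
with neutral element `e`, a core function `core`, and a stability predicate,
satisfying the axioms of Dardinier et al. -/
structure SepAlgebra (A : Type) where
  op : A → A → Option A
  e : A
  core : A → A
  stable : A → Prop
  comm : ∀ a b, op a b = op b a
  assoc : ∀ a b c ab x, op a b = some ab → op ab c = some x →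
    ∃ bc, op b c = some bc ∧ op a bc = some x
  neutral : ∀ a, op a e = some a
  core_add : ∀ x, op x (core x) = some x
  core_idem : ∀ x, op (core x) (core x) = some (core x)
  core_max : ∀ x c, op x c = some x → ∃ r, op c r = some (core x)
  core_lin : ∀ a b c, op a b = some c → op (core a) (core b) = some (core c)
  stable_e : stable e
  stable_add : ∀ a b c, op a b = some c → stable a → stable b → stable c
  positivity : ∀ a b c, op a b = some c → op c c = some c → op a a = some a
  cancel : ∀ a b x y, op b x = some a → op b y = some a → core x = core y → x = y

/-- `σ2 ≽ σ1` iff `σ2 = σ1 ⊕ σr` for some `σr`. -/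
def SepAlgebra.geq {A : Type} (S : SepAlgebra A) (σ2 σ1 : A) : Prop :=
  ∃ σr, S.op σ1 σr = some σ2

/-! If `σ₁ ⊕ r = σ₂`, then `r ⊕ |σ₂|` is again a remainder, since `σ₂ ⊕ |σ₂| = σ₂`, and its
core is exactly `|σ₂|`. Cancellativity therefore identifies all remainders enlarged in this
way, and every remainder `r'` lies below `r' ⊕ |σ₂|`, which is thus the largest one. -/

namespace SepAlgebra

variable {A : Type} (S : SepAlgebra A)

theorem core_core (x : A) : S.core (S.core x) = S.core x := by
  obtain ⟨t, ht⟩ := S.core_max (S.core x) (S.core x) (S.core_idem x)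
  obtain ⟨u, hu, hxu⟩ := S.assoc _ _ _ _ _ (S.core_idem x) ht
  rw [ht, Option.some_inj] at hu
  rw [← hu, S.core_add, Option.some_inj] at hxu
  exact hxu.symm

variable {S}

theorem core_op_core_of_op {a b c : A} (h : S.op a b = some c) :
    S.op (S.core b) (S.core c) = some (S.core c) := by
  have hba : S.op (S.core b) (S.core a) = some (S.core c) := by
    rw [S.comm]; exact S.core_lin a b c h
  obtain ⟨u, hu, hbu⟩ := S.assoc _ _ _ _ _ (S.core_idem b) hba
  rw [hba, Option.some_inj] at hu
  rwa [← hu] at hbu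

theorem core_eq_of_op_core {a b c d : A} (hab : S.op a b = some c)
    (hd : S.op b (S.core c) = some d) : S.core d = S.core c := by
  have hlin := S.core_lin _ _ _ hd
  rw [S.core_core, core_op_core_of_op hab, Option.some_inj] at hlin
  exact hlin.symm

theorem exists_op_core_of_op {σ₁ r σ₂ : A} (h : S.op σ₁ r = some σ₂) :
    ∃ rc, S.op r (S.core σ₂) = some rc ∧ S.op σ₁ rc = some σ₂ ∧ S.core rc = S.core σ₂ := by
  obtain ⟨rc, hrc, hσ⟩ := S.assoc _ _ _ _ _ h (S.core_add σ₂)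
  exact ⟨rc, hrc, hσ, core_eq_of_op_core h hrc⟩

end SepAlgebra

/-- if  then there exists a -largest state 
with , i.e. the subtraction  is well-defined. -/
theorem subtraction_exists {A : Type} (S : SepAlgebra A) (σ1 σ2 : A)
    (h : S.geq σ2 σ1) :
    ∃ σr, S.op σ1 σr = some σ2 ∧
      ∀ σr', S.op σ1 σr' = some σ2 → S.geq σr σr' := by
  obtain ⟨r, hr⟩ := h
  obtain ⟨rc, -, hσ, hcore⟩ := SepAlgebra.exists_op_core_of_op hr
  refine ⟨rc, hσ, fun r' hr' => ?_⟩
  obtain ⟨rc', hrc', hσ', hcore'⟩ := SepAlgebra.exists_op_core_of_op hr'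
  have hrc_eq : rc = rc' := S.cancel _ _ _ _ hσ hσ' (hcore.trans hcore'.symm)
  exact ⟨S.core σ2, hrc_eq ▸ hrc'⟩
end

section
/- The fractional-permission state model forms a separation algebra: the addition of valid states (defined when heaps agree on common domains and permissions sum to at most 1 at each location) is partial, commutative, associative, with the empty state as neutral element, the core |(π,h)| = (λ_.0, h) satisfies the core axioms, and the algebra satisfies positivity and cancellativity. -/
/-- A valid state of the fractional-permission model with a distinguished
`null` location: a permission mask `pi : L → ℚ` with values in `[0,1]`,
zero at `null`, and a partial heap `hp` defined wherever permission is positive. -/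
structure VState (L V : Type) (nullL : L) where
  pi : L → ℚ
  hp : L → Option V
  nonneg : ∀ l, 0 ≤ pi l
  le_one : ∀ l, pi l ≤ 1
  null_zero : pi nullL = 0
  valid : ∀ l, 0 < pi l → (hp l).isSome

/-- Compatibility: heaps agree on the common domain and permissions sum to at most 1. -/
def vcompat {L V : Type} {nullL : L} (s1 s2 : VState L V nullL) : Prop :=
  (∀ l v1 v2, s1.hp l = some v1 → s2.hp l = some v2 → v1 = v2) ∧
  (∀ l, s1.pi l + s2.pi l ≤ 1)

/-- Union of partial heaps. -/
def hunion {V : Type} (o1 o2 : Option V) : Option V :=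
  match o1 with
  | some v => some v
  | none => o2

open Classical in
/-- Partial addition of valid states: defined iff the heaps agree on the common
domain and the permissions sum to at most 1 at each location. -/
noncomputable def vop {L V : Type} {nullL : L} (s1 s2 : VState L V nullL) :
    Option (VState L V nullL) :=
  if h : vcompat s1 s2 then
    some { pi := fun l => s1.pi l + s2.pi l,
           hp := fun l => hunion (s1.hp l) (s2.hp l),
           nonneg := fun l => add_nonneg (s1.nonneg l) (s2.nonneg l),
           le_one := fun l => h.2 l,
           null_zero := by simp [s1.null_zero, s2.null_zero],
           valid := by
             intro l hl
             have hl' : 0 < s1.pi l + s2.pi l := hl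
             rcases h1 : s1.hp l with _ | v
             · have h2 : 0 < s2.pi l := by
                 by_contra hc
                 push_neg at hc
                 have hpos : 0 < s1.pi l := by
                   have := s2.nonneg l
                   linarith
                 have := s1.valid l hpos
                 rw [h1] at this
                 simp at this
               have h2' := s2.valid l h2
               simp only [hunion, h1]
               exact h2'
             · simp [hunion, h1] }
  else none

/-- The empty state. -/
def vEmpty (L V : Type) (nullL : L) : VState L V nullL :=
  { pi := fun _ => 0,
    hp := fun _ => none,
    nonneg := fun _ => le_refl 0,
    le_one := fun _ => by norm_num,
    null_zero := rfl,
    valid := fun _ h => absurd h (by norm_num) }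

/-- The core of a state: the same heap with all permissions erased. -/
def vcore {L V : Type} {nullL : L} (s : VState L V nullL) : VState L V nullL :=
  { pi := fun _ => 0,
    hp := s.hp,
    nonneg := fun _ => le_refl 0,
    le_one := fun _ => by norm_num,
    null_zero := rfl,
    valid := fun _ h => absurd h (by norm_num) }

/-- Stability: positive permission iff the heap value is defined. -/
def vstable {L V : Type} {nullL : L} (s : VState L V nullL) : Prop :=
  ∀ l, 0 < s.pi l ↔ (s.hp l).isSome

/-!
Permissions add pointwise in `[0,1]` and heaps combine by the union of agreeing partial
functions, so every axiom splits, location by location, into arithmetic on the masks and a fact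
about the heaps. A state `b` is a unit for `a` exactly when its mask vanishes and its heap is
contained in that of `a`; this one characterisation gives the neutral element, the core axioms
and positivity. Cancellativity holds because addition of rationals cancels on the masks, while
the core of a state remembers its whole heap.
-/

attribute [ext] VState

section Heap

variable {V : Type}

def hagree (o₁ o₂ : Option V) : Prop :=
  ∀ v₁ v₂, o₁ = some v₁ → o₂ = some v₂ → v₁ = v₂

theorem hagree.symm {o₁ o₂ : Option V} (h : hagree o₁ o₂) : hagree o₂ o₁ :=
  fun v₁ v₂ h₁ h₂ => (h v₂ v₁ h₂ h₁).symm

@[simp]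
theorem hunion_none (o : Option V) : hunion o none = o := by
  cases o <;> rfl

theorem hunion_assoc (o₁ o₂ o₃ : Option V) :
    hunion (hunion o₁ o₂) o₃ = hunion o₁ (hunion o₂ o₃) := by
  cases o₁ <;> rfl

theorem hunion_comm_of_hagree {o₁ o₂ : Option V} (h : hagree o₁ o₂) :
    hunion o₁ o₂ = hunion o₂ o₁ := by
  rcases o₁ with _ | v₁ <;> rcases o₂ with _ | v₂
  · rfl
  · rfl
  · rfl
  · simp only [hunion, h v₁ v₂ rfl rfl]

theorem hunion_isSome (o₁ o₂ : Option V) :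
    (hunion o₁ o₂).isSome = (o₁.isSome || o₂.isSome) := by
  cases o₁ <;> rfl

theorem hagree_right_of_hagree_hunion {o₁ o₂ o₃ : Option V} (h₁₂ : hagree o₁ o₂)
    (h : hagree (hunion o₁ o₂) o₃) : hagree o₂ o₃ := by
  intro v₂ v₃ h₂ h₃
  rw [hunion_comm_of_hagree h₁₂, h₂] at h
  exact h v₂ v₃ rfl h₃

theorem hagree_hunion_of_hagree_hunion {o₁ o₂ o₃ : Option V} (h₁₂ : hagree o₁ o₂)
    (h : hagree (hunion o₁ o₂) o₃) : hagree o₁ (hunion o₂ o₃) := by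
  intro v₁ v h₁ hv
  rcases o₂ with _ | v₂
  · exact h v₁ v (by rw [h₁]; rfl) hv
  · exact h₁₂ v₁ v h₁ hv

end Heap

namespace VState

variable {L V : Type} {nullL : L} {a b c : VState L V nullL}

theorem vcompat_comm : vcompat a b ↔ vcompat b a :=
  ⟨fun h => ⟨fun l => hagree.symm (h.1 l), fun l => add_comm (a.pi l) _ ▸ h.2 l⟩,
   fun h => ⟨fun l => hagree.symm (h.1 l), fun l => add_comm (b.pi l) _ ▸ h.2 l⟩⟩

theorem vop_eq_some_iff : vop a b = some c ↔
    vcompat a b ∧ (∀ l, c.pi l = a.pi l + b.pi l) ∧ ∀ l, c.hp l = hunion (a.hp l) (b.hp l) := by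
  unfold vop
  split_ifs with h
  · simp only [Option.some.injEq, h, true_and]
    constructor
    · rintro rfl
      exact ⟨fun _ => rfl, fun _ => rfl⟩
    · rintro ⟨hpi, hhp⟩
      ext l <;> simp only [hpi, hhp]
  · simp [h]

theorem exists_vop_eq_some (h : vcompat a b) : ∃ c, vop a b = some c := by
  unfold vop
  exact ⟨_, dif_pos h⟩

theorem vop_comm (a b : VState L V nullL) : vop a b = vop b a := by
  suffices ∀ {a b c : VState L V nullL}, vop a b = some c → vop b a = some c from
    Option.ext fun _ => ⟨this, this⟩
  intro a b c h
  obtain ⟨hab, hpi, hhp⟩ := vop_eq_some_iff.1 h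
  refine vop_eq_some_iff.2 ⟨vcompat_comm.1 hab, fun l => ?_, fun l => ?_⟩
  · rw [hpi, add_comm]
  · rw [hhp, hunion_comm_of_hagree (hab.1 l)]

theorem vop_assoc {ab x : VState L V nullL} (hab : vop a b = some ab)
    (habc : vop ab c = some x) : ∃ bc, vop b c = some bc ∧ vop a bc = some x := by
  obtain ⟨⟨hagree_ab, -⟩, hab_pi, hab_hp⟩ := vop_eq_some_iff.1 hab
  obtain ⟨⟨hagree_abc, hle_abc⟩, hx_pi, hx_hp⟩ := vop_eq_some_iff.1 habc
  have hagree_abc' : ∀ l, hagree (hunion (a.hp l) (b.hp l)) (c.hp l) := fun l =>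
    hab_hp l ▸ hagree_abc l
  have hbc : vcompat b c :=
    ⟨fun l => hagree_right_of_hagree_hunion (hagree_ab l) (hagree_abc' l),
     fun l => by linarith [hle_abc l, hab_pi l, a.nonneg l]⟩
  obtain ⟨bc, hbc_eq⟩ := exists_vop_eq_some hbc
  obtain ⟨-, hbc_pi, hbc_hp⟩ := vop_eq_some_iff.1 hbc_eq
  refine ⟨bc, hbc_eq, vop_eq_some_iff.2 ⟨⟨fun l => ?_, fun l => ?_⟩, fun l => ?_, fun l => ?_⟩⟩
  · rw [hbc_hp]
    exact hagree_hunion_of_hagree_hunion (hagree_ab l) (hagree_abc' l)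
  · linarith [hle_abc l, hab_pi l, hbc_pi l]
  · linarith [hx_pi l, hab_pi l, hbc_pi l]
  · rw [hx_hp, hab_hp, hbc_hp, hunion_assoc]

theorem vop_eq_self_iff : vop a b = some a ↔
    (∀ l, b.pi l = 0) ∧ ∀ l v, b.hp l = some v → a.hp l = some v := by
  rw [vop_eq_some_iff]
  constructor
  · rintro ⟨⟨hagree_ab, -⟩, hpi, hhp⟩
    refine ⟨fun l => by linarith [hpi l], fun l v hv => ?_⟩
    rcases ha : a.hp l with _ | u
    · simpa [ha, hv, hunion] using hhp l
    · rw [hagree_ab l u v ha hv]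
  · rintro ⟨hpi, hhp⟩
    refine ⟨⟨fun l v₁ v₂ h₁ h₂ => ?_, fun l => ?_⟩, fun l => ?_, fun l => ?_⟩
    · simpa [h₁] using hhp l v₂ h₂
    · simpa [hpi l] using a.le_one l
    · simp [hpi l]
    · rcases hb : b.hp l with _ | v
      · simp
      · simp [hunion, hhp l v hb]

theorem vop_vcore_vcore_of_vop (h : vop a b = some c) :
    vop (vcore a) (vcore b) = some (vcore c) := by
  obtain ⟨⟨hagree_ab, -⟩, -, hhp⟩ := vop_eq_some_iff.1 h
  exact vop_eq_some_iff.2 ⟨⟨hagree_ab, fun _ => by simp [vcore]⟩, fun _ => by simp [vcore], hhp⟩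

theorem vstable_of_vop (h : vop a b = some c) (ha : vstable a) (hb : vstable b) :
    vstable c := by
  obtain ⟨-, hpi, hhp⟩ := vop_eq_some_iff.1 h
  refine fun l => ⟨c.valid l, fun hc => ?_⟩
  rw [hhp, hunion_isSome, Bool.or_eq_true] at hc
  rw [hpi]
  rcases hc with hc | hc
  · linarith [(ha l).2 hc, b.nonneg l]
  · linarith [(hb l).2 hc, a.nonneg l]

theorem vop_self_of_vop_of_vop_self (h : vop a b = some c) (hc : vop c c = some c) :
    vop a a = some a := by
  obtain ⟨-, hpi, -⟩ := vop_eq_some_iff.1 h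
  have hc_pi := (vop_eq_self_iff.1 hc).1
  exact vop_eq_self_iff.2
    ⟨fun l => by linarith [hpi l, hc_pi l, a.nonneg l, b.nonneg l], fun _ _ => id⟩

theorem eq_of_vop_eq_of_vop_eq_of_vcore_eq {x y : VState L V nullL}
    (hx : vop b x = some a) (hy : vop b y = some a) (hcore : vcore x = vcore y) : x = y := by
  obtain ⟨-, hx_pi, -⟩ := vop_eq_some_iff.1 hx
  obtain ⟨-, hy_pi, -⟩ := vop_eq_some_iff.1 hy
  ext1
  · funext l
    linarith [hx_pi l, hy_pi l]
  · exact (congrArg VState.hp hcore : (vcore x).hp = (vcore y).hp)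

end VState

/-- the fractional-permission state model forms a separation
algebra: the partial addition is commutative and associative with the empty
state as neutral element, the core satisfies the core axioms, stability is
preserved, and the algebra satisfies positivity and cancellativity. -/
theorem fracModel_is_sepAlgebra (L V : Type) (nullL : L) :
    (∀ a b : VState L V nullL, vop a b = vop b a) ∧
    (∀ a b c ab x : VState L V nullL, vop a b = some ab → vop ab c = some x →
        ∃ bc, vop b c = some bc ∧ vop a bc = some x) ∧
    (∀ a : VState L V nullL, vop a (vEmpty L V nullL) = some a) ∧
    (∀ x : VState L V nullL, vop x (vcore x) = some x) ∧
    (∀ x : VState L V nullL, vop (vcore x) (vcore x) = some (vcore x)) ∧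
    (∀ x c : VState L V nullL, vop x c = some x → ∃ r, vop c r = some (vcore x)) ∧
    (∀ a b c : VState L V nullL, vop a b = some c →
        vop (vcore a) (vcore b) = some (vcore c)) ∧
    vstable (vEmpty L V nullL) ∧
    (∀ a b c : VState L V nullL, vop a b = some c →
        vstable a → vstable b → vstable c) ∧
    (∀ a b c : VState L V nullL, vop a b = some c → vop c c = some c →
        vop a a = some a) ∧
    (∀ a b x y : VState L V nullL, vop b x = some a → vop b y = some a →
        vcore x = vcore y → x = y) := by
  refine ⟨VState.vop_comm, fun _ _ _ _ _ => VState.vop_assoc, fun _ => ?_, fun _ => ?_,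
    fun _ => ?_, fun x c h => ?_, fun _ _ _ => VState.vop_vcore_vcore_of_vop, fun _ => ?_,
    fun _ _ _ => VState.vstable_of_vop, fun _ _ _ => VState.vop_self_of_vop_of_vop_self,
    fun _ _ _ _ => VState.eq_of_vop_eq_of_vop_eq_of_vcore_eq⟩
  · exact VState.vop_eq_self_iff.2 ⟨fun _ => rfl, fun _ _ h => nomatch h⟩
  · exact VState.vop_eq_self_iff.2 ⟨fun _ => rfl, fun _ _ => id⟩
  · exact VState.vop_eq_self_iff.2 ⟨fun _ => rfl, fun _ _ => id⟩
  · obtain ⟨hc_pi, hc_hp⟩ := VState.vop_eq_self_iff.1 h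
    exact ⟨vcore x, VState.vop_comm c _ ▸ VState.vop_eq_self_iff.2 ⟨hc_pi, hc_hp⟩⟩
  · simp [vEmpty]
end

section
/- Splitting of fractional assertions is always sound: for any assertion A and positive rationals p, q with p + q ≤ 1, A^{p+q} entails A^p * A^q. -/
/-- A state of the fractional-permission model: a permission mask
`pi : L → ℚ` (with values in `[0,1]`) and a partial heap `hp : L → Option V`,
subject to the validity condition that positive permission implies a defined value. -/
structure FState (L V : Type) where
  pi : L → ℚ
  hp : L → Option V
  nonneg : ∀ l, 0 ≤ pi l
  le_one : ∀ l, pi l ≤ 1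
  valid : ∀ l, 0 < pi l → (hp l).isSome

/-- Compatibility: heaps agree on the common domain and permissions sum to at most 1. -/
def compat {L V : Type} (s1 s2 : FState L V) : Prop :=
  (∀ l v1 v2, s1.hp l = some v1 → s2.hp l = some v2 → v1 = v2) ∧
  (∀ l, s1.pi l + s2.pi l ≤ 1)

open Classical in
/-- Partial addition of states. -/
noncomputable def fadd {L V : Type} (s1 s2 : FState L V) : Option (FState L V) :=
  if h : compat s1 s2 then
    some { pi := fun l => s1.pi l + s2.pi l,
           hp := fun l => hunion (s1.hp l) (s2.hp l),
           nonneg := fun l => add_nonneg (s1.nonneg l) (s2.nonneg l),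
           le_one := fun l => h.2 l,
           valid := by
             intro l hl
             have hl' : 0 < s1.pi l + s2.pi l := hl
             rcases h1 : s1.hp l with _ | v
             · have h2 : 0 < s2.pi l := by
                 by_contra hc
                 push_neg at hc
                 have hpos : 0 < s1.pi l := by
                   have := s2.nonneg l
                   linarith
                 have := s1.valid l hpos
                 rw [h1] at this
                 simp at this
               have h2' := s2.valid l h2
               simp only [hunion, h1]
               exact h2'
             · simp [hunion, h1] }
  else none

/-- `t` is the state `s` with all permissions multiplied by `α` (same heap). -/
def isSmul {L V : Type} (α : ℚ) (s t : FState L V) : Prop :=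
  (∀ l, t.pi l = α * s.pi l) ∧ t.hp = s.hp

/-- Separating conjunction. -/
def satStar {L V : Type} (A B : FState L V → Prop) (σ : FState L V) : Prop :=
  ∃ σ1 σ2, fadd σ1 σ2 = some σ ∧ A σ1 ∧ B σ2

/-- Fractional assertion `A^p`. -/
def fracSat {L V : Type} (p : ℚ) (A : FState L V → Prop) (σ : FState L V) : Prop :=
  ∃ σ', A σ' ∧ isSmul p σ' σ

/-- Standard magic wand. -/
def satWand {L V : Type} (A B : FState L V → Prop) (σw : FState L V) : Prop :=
  ∀ σA σ, A σA → fadd σA σw = some σ → B σ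

/-- Order induced by ⊕. -/
def fgeq {L V : Type} (σ2 σ1 : FState L V) : Prop :=
  ∃ r, fadd σ1 r = some σ2

/-- `B` is intuitionistic: closed under state extension. -/
def intuit {L V : Type} (B : FState L V → Prop) : Prop :=
  ∀ σ σ' r, B σ → fadd σ r = some σ' → B σ'

/-- `A` is combinable: `A^p * A^q ⊨ A^{p+q}`. -/
def combinable {L V : Type} (A : FState L V → Prop) : Prop :=
  ∀ p q : ℚ, 0 < p → 0 < q → p + q ≤ 1 →
    ∀ σ, satStar (fracSat p A) (fracSat q A) σ → fracSat (p + q) A σ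

/-- Some scaling of `σw` (by `0 < α ≤ 1`) is compatible with `σA`. -/
def scaledCompat {L V : Type} (σA σw : FState L V) : Prop :=
  ∃ α t, 0 < α ∧ α ≤ 1 ∧ isSmul α σw t ∧ compat σA t

/-- Truncation of `σw` so that it fits next to `σA`. -/
def trunc {L V : Type} (sA sw : FState L V) : FState L V :=
  { pi := fun l => min (sw.pi l) (1 - sA.pi l),
    hp := sw.hp,
    nonneg := fun l => le_min (sw.nonneg l) (by linarith [sA.le_one l]),
    le_one := fun l => le_trans (min_le_left _ _) (sw.le_one l),
    valid := fun l hl => sw.valid l (lt_of_lt_of_le hl (min_le_left _ _)) }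

open Classical in
/-- The transformation `R(σA, σw)` used in the definition of combinable wands. -/
noncomputable def Rtrans {L V : Type} (σA σw : FState L V) : FState L V :=
  if scaledCompat σA σw then trunc σA σw else σw

/-- Combinable magic wand `A -*c B`. -/
def satCWand {L V : Type} (A B : FState L V → Prop) (σw : FState L V) : Prop :=
  ∀ σA σ, A σA → fadd σA (Rtrans σA σw) = some σ → B σ

/-- A stable state: positive permission iff the heap value is defined. -/
def fstable {L V : Type} (σ : FState L V) : Prop :=
  ∀ l, 0 < σ.pi l ↔ (σ.hp l).isSome

open Classical in
/-- The state with permission `q` and value `v` at the single location `l0`. -/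
noncomputable def single {L V : Type} (l0 : L) (v : V) (q : ℚ)
    (h0 : 0 ≤ q) (h1 : q ≤ 1) : FState L V :=
  { pi := fun l => if l = l0 then q else 0,
    hp := fun l => if l = l0 then some v else none,
    nonneg := by intro l; by_cases h : l = l0 <;> simp [h, h0]
    le_one := by intro l; by_cases h : l = l0 <;> simp [h, h1]
    valid := by
      intro l hl
      by_cases h : l = l0 <;> simp [h] at hl ⊢ }

/-- The binary restriction of a state. -/
noncomputable def binState {L V : Type} (σ : FState L V) : FState L V :=
  { pi := fun l => if σ.pi l = 1 then 1 else 0,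
    hp := σ.hp,
    nonneg := by intro l; show 0 ≤ if σ.pi l = 1 then (1:ℚ) else 0; split <;> norm_num,
    le_one := by intro l; show (if σ.pi l = 1 then (1:ℚ) else 0) ≤ 1; split <;> norm_num,
    valid := by
      intro l hl
      have hl' : 0 < if σ.pi l = 1 then (1:ℚ) else 0 := hl
      split at hl'
      · next h => exact σ.valid l (by rw [h]; norm_num)
      · simp at hl' }

/-- `A` is a binary assertion. -/
def binaryAssertion {L V : Type} (A : FState L V → Prop) : Prop :=
  ∀ σ, A σ → A (binState σ)

/-- Heaps agree on the common domain. -/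
def heapCompat {L V : Type} (s1 s2 : FState L V) : Prop :=
  ∀ l v1 v2, s1.hp l = some v1 → s2.hp l = some v2 → v1 = v2

/-!
The state `(p + q) • σ'` is the sum of `p • σ'` and `q • σ'`: the two pieces carry the same
heap, so they are compatible, and their masks add up to `(p + q) • σ'.pi ≤ 1`.
-/

theorem hunion_self {V : Type} (o : Option V) : hunion o o = o := by
  cases o <;> rfl

namespace FState

variable {L V : Type}

theorem ext {s t : FState L V} (hpi : s.pi = t.pi) (hhp : s.hp = t.hp) : s = t := by
  cases s; cases t; simp_all

def scale (α : ℚ) (h0 : 0 ≤ α) (h1 : α ≤ 1) (s : FState L V) : FState L V where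
  pi l := α * s.pi l
  hp := s.hp
  nonneg l := mul_nonneg h0 (s.nonneg l)
  le_one l := mul_le_one₀ h1 (s.nonneg l) (s.le_one l)
  valid l hl := s.valid l (pos_of_mul_pos_right hl h0)

theorem isSmul_scale (α : ℚ) (h0 : 0 ≤ α) (h1 : α ≤ 1) (s : FState L V) :
    isSmul α s (s.scale α h0 h1) :=
  ⟨fun _ => rfl, rfl⟩

theorem fracSat_scale {A : FState L V → Prop} {s : FState L V} (hA : A s)
    (α : ℚ) (h0 : 0 ≤ α) (h1 : α ≤ 1) : fracSat α A (s.scale α h0 h1) :=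
  ⟨s, hA, isSmul_scale α h0 h1 s⟩

end FState

open FState

theorem fadd_eq_some {L V : Type} {s1 s2 t : FState L V} (hc : compat s1 s2)
    (hpi : ∀ l, t.pi l = s1.pi l + s2.pi l) (hhp : ∀ l, t.hp l = hunion (s1.hp l) (s2.hp l)) :
    fadd s1 s2 = some t := by
  rw [fadd, dif_pos hc]
  exact congrArg some (FState.ext (funext fun l => (hpi l).symm) (funext fun l => (hhp l).symm))

theorem compat_scale_scale {L V : Type} (s : FState L V) {α β : ℚ} (hα0 : 0 ≤ α) (hα1 : α ≤ 1)
    (hβ0 : 0 ≤ β) (hβ1 : β ≤ 1) (hαβ : α + β ≤ 1) :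
    compat (s.scale α hα0 hα1) (s.scale β hβ0 hβ1) := by
  refine ⟨fun l v1 v2 h1 h2 => ?_, fun l => ?_⟩
  · exact Option.some_injective _ (h1.symm.trans h2)
  · change α * s.pi l + β * s.pi l ≤ 1
    rw [← add_mul]
    exact mul_le_one₀ hαβ (s.nonneg l) (s.le_one l)

theorem isSmul.fadd_scale_scale {L V : Type} {s t : FState L V} {α β : ℚ}
    (hα0 : 0 ≤ α) (hα1 : α ≤ 1) (hβ0 : 0 ≤ β) (hβ1 : β ≤ 1) (hαβ : α + β ≤ 1)
    (h : isSmul (α + β) s t) :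
    fadd (s.scale α hα0 hα1) (s.scale β hβ0 hβ1) = some t :=
  fadd_eq_some (compat_scale_scale s hα0 hα1 hβ0 hβ1 hαβ)
    (fun l => (h.1 l).trans (add_mul α β (s.pi l)))
    (fun l => by rw [h.2]; exact (hunion_self _).symm)

/-- splitting of fractional assertions is always sound:
`A^{p+q} ⊨ A^p * A^q` for positive `p`, `q` with `p + q ≤ 1`. -/
theorem frac_split_sound {L V : Type} (A : FState L V → Prop) (p q : ℚ)
    (hp : 0 < p) (hq : 0 < q) (hpq : p + q ≤ 1) (σ : FState L V)
    (h : fracSat (p + q) A σ) :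
    satStar (fracSat p A) (fracSat q A) σ := by
  obtain ⟨σ', hA, hσ⟩ := h
  have hp1 : p ≤ 1 := by linarith
  have hq1 : q ≤ 1 := by linarith
  exact ⟨_, _, hσ.fadd_scale_scale hp.le hp1 hq.le hq1 hpq,
    fracSat_scale hA p hp.le hp1, fracSat_scale hA q hq.le hq1⟩
end

section
/- The disjunction acc(x.f) ∨ acc(x.g) of full permissions to two distinct locations is not combinable: there exists a state satisfying (acc(x.f) ∨ acc(x.g))^{1/2} * (acc(x.f) ∨ acc(x.g))^{1/2} that does not satisfy acc(x.f) ∨ acc(x.g). -/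
/-- The disjunction `acc(x.f) ∨ acc(x.g)` (intuitionistic reading). -/
def accDisj {L V : Type} (lf lg : L) (σ : FState L V) : Prop :=
  1 ≤ σ.pi lf ∨ 1 ≤ σ.pi lg

theorem fadd_pi {L V : Type} {s1 s2 σ : FState L V} (h : fadd s1 s2 = some σ) (l : L) :
    σ.pi l = s1.pi l + s2.pi l := by
  unfold fadd at h
  split at h
  · rw [← Option.some_inj.mp h]
  · exact absurd h (by simp)

theorem exists_fadd_eq_some_of_compat {L V : Type} {s1 s2 : FState L V} (h : compat s1 s2) :
    ∃ σ, fadd s1 s2 = some σ := by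
  rw [fadd, dif_pos h]
  exact ⟨_, rfl⟩

section single

variable {L V : Type} {l0 : L} {v : V} {q : ℚ} {h0 : 0 ≤ q} {h1 : q ≤ 1}

@[simp]
theorem single_pi_self : (single l0 v q h0 h1).pi l0 = q := by
  simp [single]

theorem single_pi_of_ne {l : L} (h : l ≠ l0) : (single l0 v q h0 h1).pi l = 0 := by
  simp [single, h]

theorem compat_single_of_ne {l1 : L} {w : V} {r : ℚ} {h0' : 0 ≤ r} {h1' : r ≤ 1}
    (hne : l0 ≠ l1) : compat (single l0 v q h0 h1) (single l1 w r h0' h1') := by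
  refine ⟨fun l v1 v2 hv1 hv2 => ?_, fun l => ?_⟩
  · simp only [single] at hv1 hv2
    split at hv1
    · subst l; simp [hne] at hv2
    · simp at hv1
  · by_cases hl : l = l0
    · subst l; rw [single_pi_of_ne hne, add_zero]; exact FState.le_one _ _
    · rw [single_pi_of_ne hl, zero_add]; exact FState.le_one _ _

theorem isSmul_single {α r : ℚ} {h0' : 0 ≤ r} {h1' : r ≤ 1} (hr : r = α * q) :
    isSmul α (single l0 v q h0 h1) (single l0 v r h0' h1') := by
  refine ⟨fun l => ?_, rfl⟩
  by_cases hl : l = l0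
  · subst l; simp [hr]
  · simp [single_pi_of_ne hl]

end single

/-- `acc(x.f) ∨ acc(x.g)` is not combinable: some state
satisfies `(acc(x.f) ∨ acc(x.g))^{1/2} * (acc(x.f) ∨ acc(x.g))^{1/2}` but not
`acc(x.f) ∨ acc(x.g)`. -/
theorem accDisj_not_combinable {L V : Type} (lf lg : L) (hne : lf ≠ lg) (v : V) :
    ∃ σ : FState L V,
      satStar (fracSat (1/2) (accDisj lf lg)) (fracSat (1/2) (accDisj lf lg)) σ ∧
      ¬ accDisj lf lg σ := by
  let σf : FState L V := single lf v (1/2) (by norm_num) (by norm_num)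
  let σg : FState L V := single lg v (1/2) (by norm_num) (by norm_num)
  have half_f : fracSat (1/2) (accDisj lf lg) σf :=
    ⟨single lf v 1 zero_le_one le_rfl, Or.inl (by simp), isSmul_single (by norm_num)⟩
  have half_g : fracSat (1/2) (accDisj lf lg) σg :=
    ⟨single lg v 1 zero_le_one le_rfl, Or.inr (by simp), isSmul_single (by norm_num)⟩
  obtain ⟨σ, hσ⟩ : ∃ σ, fadd σf σg = some σ :=
    exists_fadd_eq_some_of_compat (compat_single_of_ne hne)
  have hσf : σ.pi lf = 1/2 := by
    rw [fadd_pi hσ, single_pi_self, single_pi_of_ne hne, add_zero]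
  have hσg : σ.pi lg = 1/2 := by
    rw [fadd_pi hσ, single_pi_self, single_pi_of_ne hne.symm, zero_add]
  refine ⟨σ, ⟨σf, σg, hσ, half_f, half_g⟩, ?_⟩
  rintro (h | h) <;> norm_num [hσf, hσg] at h
end

section
/- The combinable wand entails the standard wand: for any assertions A and B with B intuitionistic, A -*c B ⊨ A -* B. -/
/-! Whenever `σA ⊕ σw` is defined, `σw` itself (the scaling by `α = 1`) is compatible with `σA`,
and the truncation `min (π_w l) (1 - π_A l)` leaves `π_w` unchanged, so `R(σA, σw) = σw` and the
two wands quantify over the same sums. -/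

section CombinableWand

variable {L V : Type}

theorem FState.ext_s12 {s t : FState L V} (hpi : s.pi = t.pi) (hhp : s.hp = t.hp) : s = t := by
  cases s
  cases t
  congr

theorem compat_of_fadd_eq_some {s1 s2 σ : FState L V} (h : fadd s1 s2 = some σ) :
    compat s1 s2 := by
  by_contra hc
  rw [fadd, dif_neg hc] at h
  cases h

theorem isSmul_one (s : FState L V) : isSmul 1 s s :=
  ⟨fun _ => (one_mul _).symm, rfl⟩

theorem scaledCompat_of_compat {σA σw : FState L V} (hc : compat σA σw) :
    scaledCompat σA σw :=
  ⟨1, σw, one_pos, le_rfl, isSmul_one σw, hc⟩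

theorem trunc_eq_self_of_compat {σA σw : FState L V} (hc : compat σA σw) :
    trunc σA σw = σw :=
  FState.ext_s12 (funext fun l => min_eq_left (by linarith [hc.2 l])) rfl

theorem Rtrans_eq_self_of_compat {σA σw : FState L V} (hc : compat σA σw) :
    Rtrans σA σw = σw := by
  rw [Rtrans, if_pos (scaledCompat_of_compat hc), trunc_eq_self_of_compat hc]

end CombinableWand

theorem cwand_entails_wand_general {L V : Type} (A B : FState L V → Prop)
    (σw : FState L V) (h : satCWand A B σw) :
    satWand A B σw := by
  intro σA σ hA hadd
  have hR : Rtrans σA σw = σw := Rtrans_eq_self_of_compat (compat_of_fadd_eq_some hadd)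
  exact h σA σ hA (by rwa [hR])

/-- the combinable wand entails the standard wand:
for `B` intuitionistic, `A -*c B ⊨ A -* B`. -/
theorem cwand_entails_wand {L V : Type} (A B : FState L V → Prop)
    (hB : intuit B) (σw : FState L V) (h : satCWand A B σw) :
    satWand A B σw :=
  cwand_entails_wand_general A B σw h
end

section
/- For any states σ_A and σ_w in the fractional-permission model, the truncated state R(σ_A, σ_w) is scalable with respect to σ_A: either σ_A is compatible with every element of scaled(R(σ_A, σ_w)), or σ_A is compatible with no element of scaled(R(σ_A, σ_w)). -/
/-! Scaling never changes the heap, so if some scaling of `σw` is compatible with `σA` then the heaps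
of `σA` and `σw` agree on their common domain; the truncation caps every permission at `1 - π_A`,
so every scaling of it is then compatible with `σA`. Otherwise `R` leaves `σw` unchanged and no
scaling of it is compatible with `σA`, by the very case assumption. -/

section Scalable

variable {L V : Type} {σA σw t : FState L V} {α : ℚ}

theorem heapCompat_of_scaledCompat (h : scaledCompat σA σw) : heapCompat σA σw := by
  obtain ⟨_, u, -, -, ⟨-, hu⟩, hcompat, -⟩ := h
  intro l v1 v2 hA hw
  exact hcompat l v1 v2 hA (by rw [hu]; exact hw)

theorem compat_of_isSmul_trunc (hheap : heapCompat σA σw) (hα1 : α ≤ 1)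
    (ht : isSmul α (trunc σA σw) t) : compat σA t := by
  obtain ⟨hpi, hhp⟩ := ht
  refine ⟨fun l v1 v2 hA ht => hheap l v1 v2 hA (by rw [hhp] at ht; exact ht), fun l => ?_⟩
  have hcap : (trunc σA σw).pi l ≤ 1 - σA.pi l := min_le_right _ _
  have hscaled : t.pi l ≤ (trunc σA σw).pi l := by
    rw [hpi]
    exact mul_le_of_le_one_left ((trunc σA σw).nonneg l) hα1
  linarith

end Scalable

/-- the truncated state `R(σA, σw)` is scalable with respect to
`σA`: either `σA` is compatible with every element of `scaled(R(σA, σw))`, or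
with none of them. -/
theorem Rtrans_scalable {L V : Type} (σA σw : FState L V) :
    (∀ α t, 0 < α → α ≤ 1 → isSmul α (Rtrans σA σw) t → compat σA t) ∨
    (∀ α t, 0 < α → α ≤ 1 → isSmul α (Rtrans σA σw) t → ¬ compat σA t) := by
  by_cases hsc : scaledCompat σA σw
  · left
    intro α t _ hα1 ht
    rw [Rtrans, if_pos hsc] at ht
    exact compat_of_isSmul_trunc (heapCompat_of_scaledCompat hsc) hα1 ht
  · right
    intro α t hα hα1 ht hcompat
    rw [Rtrans, if_neg hsc] at ht
    exact hsc ⟨α, t, hα, hα1, ht, hcompat⟩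
end

section
/- For each fixed state σ_A in the fractional-permission model, the map σ ↦ R(σ_A, σ) restricted to states heap-compatible with σ_A is monotonic with respect to the order ≽: if σ₂ ≽ σ₁ then R(σ_A, σ₂) ≽ R(σ_A, σ₁). -/
/-! `σ₂ ≽ σ₁` holds exactly when `σ₂` has pointwise more permission and extends the heap of `σ₁`;
the remainder is then `(π₂ - π₁, h₂)`. With this description `R(σ_A, ·)` is monotone on each
branch of its case split, the branch condition "some scaling fits next to `σ_A`" is inherited by
smaller states, and in the mixed branch `trunc σ_A σ₁ ≼ σ₁ ≼ σ₂`. -/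

attribute [ext] FState

section Order

variable {L V : Type}

lemma fadd_eq_some_iff {s1 s2 s : FState L V} :
    fadd s1 s2 = some s ↔ compat s1 s2 ∧ (∀ l, s.pi l = s1.pi l + s2.pi l) ∧
      ∀ l, s.hp l = hunion (s1.hp l) (s2.hp l) := by
  unfold fadd
  split_ifs with hc
  · constructor
    · rintro ⟨⟩
      exact ⟨hc, fun _ => rfl, fun _ => rfl⟩
    · rintro ⟨-, hpi, hhp⟩
      exact congrArg some (FState.ext (funext fun l => (hpi l).symm) (funext fun l => (hhp l).symm))
  · simp [hc]

lemma fgeq_iff {a b : FState L V} :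
    fgeq b a ↔ (∀ l, a.pi l ≤ b.pi l) ∧ ∀ l v, a.hp l = some v → b.hp l = some v := by
  constructor
  · rintro ⟨r, hr⟩
    obtain ⟨-, hpi, hhp⟩ := fadd_eq_some_iff.mp hr
    refine ⟨fun l => by linarith [hpi l, r.nonneg l], fun l v hv => ?_⟩
    rw [hhp l, hv]
    rfl
  · rintro ⟨hpi, hhp⟩
    let r : FState L V :=
      { pi := fun l => b.pi l - a.pi l
        hp := b.hp
        nonneg := fun l => sub_nonneg.mpr (hpi l)
        le_one := fun l => by linarith [b.le_one l, a.nonneg l]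
        valid := fun l hl => b.valid l (by linarith [a.nonneg l, show 0 < b.pi l - a.pi l from hl]) }
    refine ⟨r, fadd_eq_some_iff.mpr ⟨⟨fun l v1 v2 ha hb => ?_, fun l => ?_⟩, fun l => ?_, fun l => ?_⟩⟩
    · exact Option.some.inj ((hhp l v1 ha).symm.trans hb)
    · linarith [show r.pi l = b.pi l - a.pi l from rfl, b.le_one l]
    · show b.pi l = a.pi l + (b.pi l - a.pi l)
      ring
    · show b.hp l = hunion (a.hp l) (b.hp l)
      rcases ha : a.hp l with _ | v
      · rfl
      · exact hhp l v ha

lemma fgeq_trans {a b c : FState L V} (hcb : fgeq c b) (hba : fgeq b a) : fgeq c a := by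
  rw [fgeq_iff] at *
  exact ⟨fun l => (hba.1 l).trans (hcb.1 l), fun l v hv => hcb.2 l v (hba.2 l v hv)⟩

lemma compat_of_fgeq_right {s a b : FState L V} (hb : compat s b) (hba : fgeq b a) :
    compat s a := by
  rw [fgeq_iff] at hba
  exact ⟨fun l v1 v2 hs ha => hb.1 l v1 v2 hs (hba.2 l v2 ha),
    fun l => (add_le_add_right (hba.1 l) _).trans (hb.2 l)⟩

end Order

section Rtrans

variable {L V : Type} {σA σ1 σ2 : FState L V}

lemma scaledCompat.of_fgeq (hs : scaledCompat σA σ2) (hle : fgeq σ2 σ1) :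
    scaledCompat σA σ1 := by
  obtain ⟨α, t2, hα0, hα1, ⟨ht2pi, ht2hp⟩, hct2⟩ := hs
  have hle' := fgeq_iff.mp hle
  let t1 : FState L V :=
    { pi := fun l => α * σ1.pi l
      hp := σ1.hp
      nonneg := fun l => mul_nonneg hα0.le (σ1.nonneg l)
      le_one := fun l => by nlinarith [σ1.nonneg l, σ1.le_one l]
      valid := fun l hl => σ1.valid l (pos_of_mul_pos_right hl hα0.le) }
  have ht : fgeq t2 t1 := fgeq_iff.mpr
    ⟨fun l => (ht2pi l).symm ▸ mul_le_mul_of_nonneg_left (hle'.1 l) hα0.le,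
      fun l v hv => ht2hp ▸ hle'.2 l v hv⟩
  exact ⟨α, t1, hα0, hα1, ⟨fun _ => rfl, rfl⟩, compat_of_fgeq_right hct2 ht⟩

lemma fgeq_trunc_self (σA σ : FState L V) : fgeq σ (trunc σA σ) :=
  fgeq_iff.mpr ⟨fun _ => min_le_left _ _, fun _ _ hv => hv⟩

lemma trunc_mono (hle : fgeq σ2 σ1) : fgeq (trunc σA σ2) (trunc σA σ1) := by
  rw [fgeq_iff] at *
  exact ⟨fun l => min_le_min_right _ (hle.1 l), hle.2⟩

end Rtrans

theorem Rtrans_monotonic_general {L V : Type} (σA σ1 σ2 : FState L V)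
    (hle : fgeq σ2 σ1) :
    fgeq (Rtrans σA σ2) (Rtrans σA σ1) := by
  unfold Rtrans
  by_cases hs2 : scaledCompat σA σ2
  · rw [if_pos hs2, if_pos (hs2.of_fgeq hle)]
    exact trunc_mono hle
  · rw [if_neg hs2]
    split_ifs
    · exact fgeq_trans hle (fgeq_trunc_self σA σ1)
    · exact hle

/-- for each fixed state `σA`, the map `σ ↦ R(σA, σ)` restricted
to states heap-compatible with `σA` is monotonic w.r.t. `≽`:
if `σ2 ≽ σ1` then `R(σA, σ2) ≽ R(σA, σ1)`. -/
theorem Rtrans_monotonic {L V : Type} (σA σ1 σ2 : FState L V)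
    (h1 : heapCompat σA σ1) (h2 : heapCompat σA σ2)
    (hle : fgeq σ2 σ1) :
    fgeq (Rtrans σA σ2) (Rtrans σA σ1) :=
  Rtrans_monotonic_general σA σ1 σ2 hle
end
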